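/- arXiv:2310.10243 — 9 statements merged into one kernel-verified Lean document; each statement's English description precedes it below -/
import Mathlib

section
/- Let R be a group, S ⊆ R, and let K, H be subgroups with 1 < K, K normal in H, and H < R, such that K·(S \ H) = S \ H = (S \ H)·K. Then for every k ∈ K, the map α_k : R → R that sends h ∈ H to hk and fixes all elements outside H is an automorphism of the Cayley digraph Cay(R,S). -/
open scoped Pointwise Classical

/-! Arcs inside `H` are preserved since `x k (y k)⁻¹ = x y⁻¹`, arcs outside `H` are untouched.
For an arc between `x ∈ H` and `y ∉ H`, the element `x y⁻¹` lies outside `H` and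
`x k y⁻¹ = (x k x⁻¹) (x y⁻¹)` with `x k x⁻¹ ∈ K` by normality, so `K (S \ H) = S \ H` decides it;
for `x ∉ H`, `y ∈ H` use `x (y k)⁻¹ = (x y⁻¹) (y k⁻¹ y⁻¹)` and `(S \ H) K = S \ H`. -/

section

variable {R : Type*} [Group R]

lemma mul_mem_iff_of_subgroup_mul_eq {K : Subgroup R} {T : Set R} (hT : (K : Set R) * T = T)
    {a : R} (ha : a ∈ K) (t : R) : a * t ∈ T ↔ t ∈ T := by
  refine ⟨fun h => ?_, fun h => hT ▸ Set.mul_mem_mul ha h⟩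
  rw [← hT, ← inv_mul_cancel_left a t]
  exact Set.mul_mem_mul (K.inv_mem ha) h

lemma mul_mem_iff_of_mul_subgroup_eq {K : Subgroup R} {T : Set R} (hT : T * (K : Set R) = T)
    {a : R} (ha : a ∈ K) (t : R) : t * a ∈ T ↔ t ∈ T := by
  refine ⟨fun h => ?_, fun h => hT ▸ Set.mul_mem_mul h ha⟩
  rw [← hT, ← mul_inv_cancel_right t a]
  exact Set.mul_mem_mul h (K.inv_mem ha)

noncomputable def Subgroup.rightMulOn (H : Subgroup R) {k : R} (hk : k ∈ H) : Equiv.Perm R where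
  toFun r := if r ∈ H then r * k else r
  invFun r := if r ∈ H then r * k⁻¹ else r
  left_inv r := by
    by_cases hr : r ∈ H
    · simp [hr, H.mul_mem hr hk]
    · simp [hr]
  right_inv r := by
    by_cases hr : r ∈ H
    · simp [hr, H.mul_mem hr (H.inv_mem hk)]
    · simp [hr]

lemma Subgroup.rightMulOn_apply (H : Subgroup R) {k : R} (hk : k ∈ H) (r : R) :
    H.rightMulOn hk r = if r ∈ H then r * k else r :=
  rfl

variable {S : Set R} {K H : Subgroup R}

lemma mul_inv_not_mem_of_mem_of_not_mem {x y : R} (hx : x ∈ H) (hy : y ∉ H) :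
    x * y⁻¹ ∉ H := by
  rwa [H.mul_mem_cancel_left hx, inv_mem_iff]

lemma mul_inv_not_mem_of_not_mem_of_mem {x y : R} (hx : x ∉ H) (hy : y ∈ H) :
    x * y⁻¹ ∉ H := by
  rwa [H.mul_mem_cancel_right (H.inv_mem hy)]

lemma mul_mul_inv_mem_iff_of_mem_of_not_mem (hKH : K ≤ H)
    (hnorm : ∀ h ∈ H, ∀ k ∈ K, h * k * h⁻¹ ∈ K)
    (hS : (K : Set R) * (S \ (H : Set R)) = S \ (H : Set R))
    {k x y : R} (hk : k ∈ K) (hx : x ∈ H) (hy : y ∉ H) :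
    x * k * y⁻¹ ∈ S ↔ x * y⁻¹ ∈ S := by
  have hxy := mul_inv_not_mem_of_mem_of_not_mem hx hy
  have hxky := mul_inv_not_mem_of_mem_of_not_mem (H.mul_mem hx (hKH hk)) hy
  have key := mul_mem_iff_of_subgroup_mul_eq hS (hnorm x hx k hk) (x * y⁻¹)
  rw [show x * k * x⁻¹ * (x * y⁻¹) = x * k * y⁻¹ by group] at key
  simpa only [Set.mem_sdiff, SetLike.mem_coe, hxy, hxky, not_false_eq_true, and_true] using key

lemma mul_mul_inv_mem_iff_of_not_mem_of_mem (hKH : K ≤ H)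
    (hnorm : ∀ h ∈ H, ∀ k ∈ K, h * k * h⁻¹ ∈ K)
    (hS : (S \ (H : Set R)) * (K : Set R) = S \ (H : Set R))
    {k x y : R} (hk : k ∈ K) (hx : x ∉ H) (hy : y ∈ H) :
    x * (y * k)⁻¹ ∈ S ↔ x * y⁻¹ ∈ S := by
  have hxy := mul_inv_not_mem_of_not_mem_of_mem hx hy
  have hxyk := mul_inv_not_mem_of_not_mem_of_mem hx (H.mul_mem hy (hKH hk))
  have key := mul_mem_iff_of_mul_subgroup_eq hS (hnorm y hy k⁻¹ (K.inv_mem hk)) (x * y⁻¹)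
  rw [show x * y⁻¹ * (y * k⁻¹ * y⁻¹) = x * (y * k)⁻¹ by group] at key
  simpa only [Set.mem_sdiff, SetLike.mem_coe, hxy, hxyk, not_false_eq_true, and_true] using key

lemma rightMulOn_mul_inv_mem_iff (hKH : K ≤ H)
    (hnorm : ∀ h ∈ H, ∀ k ∈ K, h * k * h⁻¹ ∈ K)
    (hl : (K : Set R) * (S \ (H : Set R)) = S \ (H : Set R))
    (hr : (S \ (H : Set R)) * (K : Set R) = S \ (H : Set R))
    {k : R} (hk : k ∈ K) (x y : R) :
    H.rightMulOn (hKH hk) x * (H.rightMulOn (hKH hk) y)⁻¹ ∈ S ↔ x * y⁻¹ ∈ S := by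
  simp only [Subgroup.rightMulOn_apply]
  by_cases hx : x ∈ H <;> by_cases hy : y ∈ H <;> simp only [hx, hy, if_true, if_false]
  · rw [show x * k * (y * k)⁻¹ = x * y⁻¹ by group]
  · exact mul_mul_inv_mem_iff_of_mem_of_not_mem hKH hnorm hl hk hx hy
  · exact mul_mul_inv_mem_iff_of_not_mem_of_mem hKH hnorm hr hk hx hy

end

theorem stmt0_general {R : Type*} [Group R] (S : Set R) (K H : Subgroup R)
    (hKH : K ≤ H)
    (hnorm : ∀ h ∈ H, ∀ k ∈ K, h * k * h⁻¹ ∈ K)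
    (h1 : (K : Set R) * (S \ (H : Set R)) = S \ (H : Set R))
    (h2 : (S \ (H : Set R)) * (K : Set R) = S \ (H : Set R)) :
    ∀ k ∈ K, ∃ α : Equiv.Perm R,
      (∀ r_ : R, α r_ = if r_ ∈ H then r_ * k else r_) ∧
      (∀ x y : R, x * y⁻¹ ∈ S ↔ α x * (α y)⁻¹ ∈ S) := fun _ hk =>
  ⟨H.rightMulOn (hKH hk), H.rightMulOn_apply (hKH hk),
    fun x y => (rightMulOn_mul_inv_mem_iff hKH hnorm h1 h2 hk x y).symm⟩

/-- the map `α_k` (right multiplication by `k` on `H`, identity outside)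
is an automorphism of the Cayley digraph `Cay(R,S)` of a generalised wreath product. -/
theorem stmt0 {R : Type*} [Group R] (S : Set R) (K H : Subgroup R)
    (hK : ⊥ < K) (hKH : K ≤ H)
    (hnorm : ∀ h ∈ H, ∀ k ∈ K, h * k * h⁻¹ ∈ K)
    (hH : H < ⊤)
    (h1 : (K : Set R) * (S \ (H : Set R)) = S \ (H : Set R))
    (h2 : (S \ (H : Set R)) * (K : Set R) = S \ (H : Set R)) :
    ∀ k ∈ K, ∃ α : Equiv.Perm R,
      (∀ r_ : R, α r_ = if r_ ∈ H then r_ * k else r_) ∧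
      (∀ x y : R, x * y⁻¹ ∈ S ↔ α x * (α y)⁻¹ ∈ S) :=
  stmt0_general S K H hKH hnorm h1 h2
end

section
/- Let R be a group, S ⊆ R, and 1 < K < H < R subgroups such that: K is characteristic in R, K is maximal in H, K·(S \ H) = S \ H, and K·(S \ K) ≠ S \ K. Then every group automorphism of R preserving S setwise also preserves H setwise. -/
/-!
An automorphism `φ` preserving `S` fixes `K` (which is characteristic), so by `K(S \ H) = S \ H`
it maps into `H` every element `s ∈ S \ K` that some `k ∈ K` pushes out of `S`; such an `s` exists
by `K(S \ K) ≠ S \ K`, and it lies in `H` for the same reason. Hence `H ∩ φ⁻¹(H)` is a subgroup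
of `H` strictly containing `K`, so it is all of `H` by maximality. Applying this to `φ` and `φ⁻¹`
gives `φ(H) = H`.
-/

open scoped Pointwise

namespace Subgroup

variable {G : Type*} [Group G] {K H : Subgroup G} {S : Set G}

theorem exists_mul_notMem_of_mul_sdiff_ne (h : (K : Set G) * (S \ K) ≠ S \ K) :
    ∃ k ∈ K, ∃ s ∈ S, s ∉ K ∧ k * s ∉ S := by
  contrapose! h
  refine (Set.mul_subset_iff.2 ?_).antisymm (Set.subset_mul_right _ K.one_mem)
  rintro k hk s ⟨hs, hsK⟩
  exact ⟨h k hk s hs hsK, by rwa [SetLike.mem_coe, K.mul_mem_cancel_left hk]⟩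

theorem mem_of_mul_notMem_of_mul_sdiff_eq (h : (K : Set G) * (S \ H) = S \ H) {k x : G}
    (hk : k ∈ K) (hx : x ∈ S) (hkx : k * x ∉ S) : x ∈ H := by
  by_contra hxH
  have hkx' : k * x ∈ S \ H := h ▸ Set.mul_mem_mul (SetLike.mem_coe.2 hk) ⟨hx, hxH⟩
  exact hkx hkx'.1

theorem mapsTo_of_preserves [K.Characteristic] (hKH : K ≤ H)
    (hmax : ∀ L : Subgroup G, K < L → L ≤ H → L = H) (h : (K : Set G) * (S \ H) = S \ H)
    {k s : G} (hk : k ∈ K) (hs : s ∈ S) (hsK : s ∉ K) (hks : k * s ∉ S)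
    (φ : MulAut G) (hφ : ∀ x, φ x ∈ S ↔ x ∈ S) : Set.MapsTo φ H H := by
  have hφK : ∀ x, φ x ∈ K ↔ x ∈ K := fun x =>
    SetLike.ext_iff.1 (Characteristic.fixed inferInstance φ) x
  have hsH : s ∈ H := mem_of_mul_notMem_of_mul_sdiff_eq h hk hs hks
  have hφsH : φ s ∈ H := mem_of_mul_notMem_of_mul_sdiff_eq h ((hφK k).2 hk) ((hφ s).2 hs)
    (by rwa [← map_mul, hφ])
  let L : Subgroup G := H ⊓ H.comap φ.toMonoidHom
  have hKL : K < L := by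
    refine lt_of_le_of_ne (le_inf hKH fun x hx => hKH ((hφK x).2 hx)) fun hKL => hsK ?_
    exact hKL ▸ (⟨hsH, hφsH⟩ : s ∈ L)
  exact fun x hx => ((hmax L hKL inf_le_left).ge hx).2

end Subgroup

theorem stmt2_general {R : Type*} [Group R] (S : Set R) (K H : Subgroup R)
    [K.Characteristic]
    (hKH : K < H) (hmax : ∀ L : Subgroup R, K < L → L ≤ H → L = H)
    (h1 : (K : Set R) * (S \ (H : Set R)) = S \ (H : Set R))
    (h2 : (K : Set R) * (S \ (K : Set R)) ≠ S \ (K : Set R)) :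
    ∀ φ : MulAut R, φ '' S = S → φ '' (H : Set R) = (H : Set R) := by
  intro φ hφ
  obtain ⟨k, hk, s, hs, hsK, hks⟩ := Subgroup.exists_mul_notMem_of_mul_sdiff_ne h2
  have hφS : ∀ x, φ x ∈ S ↔ x ∈ S := fun x => by
    nth_rw 1 [← hφ]
    exact φ.injective.mem_set_image
  have hφH := Subgroup.mapsTo_of_preserves hKH.le hmax h1 hk hs hsK hks φ hφS
  have hφH' := Subgroup.mapsTo_of_preserves hKH.le hmax h1 hk hs hsK hks φ.symm
    fun x => by rw [← hφS, φ.apply_symm_apply]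
  refine hφH.image_subset.antisymm fun x hx => ⟨φ.symm x, hφH' hx, ?_⟩
  exact φ.apply_symm_apply x

/-- with `K` characteristic in `R`, maximal in `H`, `K(S\H) = S\H`
and `K(S\K) ≠ S\K`, every automorphism of `R` preserving `S` preserves `H`. -/
theorem stmt2 {R : Type*} [Group R] (S : Set R) (K H : Subgroup R)
    (hK : ⊥ < K) [K.Characteristic]
    (hKH : K < H) (hmax : ∀ L : Subgroup R, K < L → L ≤ H → L = H)
    (hHR : H < ⊤)
    (h1 : (K : Set R) * (S \ (H : Set R)) = S \ (H : Set R))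
    (h2 : (K : Set R) * (S \ (K : Set R)) ≠ S \ (K : Set R)) :
    ∀ φ : MulAut R, φ '' S = S → φ '' (H : Set R) = (H : Set R) :=
  stmt2_general S K H hKH hmax h1 h2
end

section
/- Let R be a group of squarefree order, S ⊆ R, and suppose Cay(R,S) is a nontrivial generalised wreath product with respect to subgroups K and H (i.e., 1 < K ⊴ H < R and K(S\H) = S\H = (S\H)K). If the center of H intersected with K is not contained in the center of R, then there exists a nontrivial automorphism of R that fixes S setwise. -/
open scoped Pointwise

/-!
Pick `g ∈ Z(H) ∩ K` outside `Z(R)`; conjugation by `g` is a nontrivial automorphism.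
It fixes every element of `S ∩ H`, since `g` centralises `H`, and it maps `S \ H` into
`K (S \ H) K = S \ H`, since `g ∈ K`.
-/

theorem MulAut.mem_center_of_conj_eq_one {G : Type*} [Group G] {g : G}
    (hg : MulAut.conj g = 1) : g ∈ Subgroup.center G := by
  refine Subgroup.mem_center_iff.mpr fun x => ?_
  have hx : g * x * g⁻¹ = x := DFunLike.congr_fun hg x
  calc x * g = g * x * g⁻¹ * g := by rw [hx]
    _ = g * x := by group

section WreathProduct

variable {R : Type*} [Group R] {S : Set R} {K H : Subgroup R}

theorem conj_mem_of_mem_centralizer_inf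
    (h1 : (K : Set R) * (S \ (H : Set R)) = S \ (H : Set R))
    (h2 : (S \ (H : Set R)) * (K : Set R) = S \ (H : Set R))
    {x : R} (hx : x ∈ Subgroup.centralizer (H : Set R) ⊓ K) {s : R} (hs : s ∈ S) :
    x * s * x⁻¹ ∈ S := by
  obtain ⟨hxH, hxK⟩ := hx
  by_cases hsH : s ∈ H
  · rwa [← Subgroup.mem_centralizer_iff.mp hxH s hsH, mul_inv_cancel_right]
  · have hxs : x * s ∈ S \ (H : Set R) := h1 ▸ Set.mul_mem_mul hxK ⟨hs, hsH⟩
    exact (h2 ▸ Set.mul_mem_mul hxs (K.inv_mem hxK) : x * s * x⁻¹ ∈ S \ (H : Set R)).1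

theorem image_conj_eq_of_mem_centralizer_inf
    (h1 : (K : Set R) * (S \ (H : Set R)) = S \ (H : Set R))
    (h2 : (S \ (H : Set R)) * (K : Set R) = S \ (H : Set R))
    {x : R} (hx : x ∈ Subgroup.centralizer (H : Set R) ⊓ K) :
    MulAut.conj x '' S = S := by
  refine (Set.image_subset_iff.mpr fun s hs =>
    conj_mem_of_mem_centralizer_inf h1 h2 hx hs).antisymm fun s hs =>
      ⟨x⁻¹ * s * x⁻¹⁻¹, conj_mem_of_mem_centralizer_inf h1 h2 (inv_mem hx) hs, ?_⟩
  show x * (x⁻¹ * s * x⁻¹⁻¹) * x⁻¹ = s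
  group

end WreathProduct

theorem stmt3_general {R : Type*} [Group R]
    (S : Set R) (K H : Subgroup R)
    (h1 : (K : Set R) * (S \ (H : Set R)) = S \ (H : Set R))
    (h2 : (S \ (H : Set R)) * (K : Set R) = S \ (H : Set R))
    (hZ : ¬ (Subgroup.centralizer (H : Set R) ⊓ K ≤ Subgroup.center R)) :
    ∃ φ : MulAut R, φ ≠ 1 ∧ φ '' S = S := by
  obtain ⟨g, hg, hgZ⟩ := Set.not_subset.mp hZ
  exact ⟨MulAut.conj g, fun h => hgZ (MulAut.mem_center_of_conj_eq_one h),
    image_conj_eq_of_mem_centralizer_inf h1 h2 hg⟩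

/-- if `Cay(R,S)` is a nontrivial generalised wreath product with respect to
`K` and `H` and `Z(H) ∩ K ≰ Z(R)`, then some nontrivial automorphism of `R` fixes `S` setwise. -/
theorem stmt3 {R : Type*} [Group R] [Finite R] (hsf : Squarefree (Nat.card R))
    (S : Set R) (K H : Subgroup R)
    (hK : ⊥ < K) (hKH : K ≤ H)
    (hnorm : ∀ h ∈ H, ∀ k ∈ K, h * k * h⁻¹ ∈ K)
    (hH : H < ⊤)
    (h1 : (K : Set R) * (S \ (H : Set R)) = S \ (H : Set R))
    (h2 : (S \ (H : Set R)) * (K : Set R) = S \ (H : Set R))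
    (hZ : ¬ (Subgroup.centralizer (H : Set R) ⊓ K ≤ Subgroup.center R)) :
    ∃ φ : MulAut R, φ ≠ 1 ∧ φ '' S = S :=
  stmt3_general S K H h1 h2 hZ
end

section
/- Let k be an element of a group R lying in Z(H) ∩ K but not in Z(R), where 1 < K ⊴ H < R and S ⊆ R satisfies K(S\H) = S\H = (S\H)K. Then conjugation by k is a nontrivial automorphism of R fixing S setwise (it fixes H pointwise and maps each element s ∈ S\H into KsK ⊆ S). -/
open scoped Pointwise

/-! Conjugation by `k` fixes `H` pointwise since `k ∈ Z(H)`, and sends `s ∈ S \ H` to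
`k⁻¹ s k ∈ K s K`, which stays in `S \ H` because that set is a union of `K`-double cosets;
the same holds for `k⁻¹`, so `S` is mapped onto itself. It is not the identity because `k`
is not central in `R`. -/

theorem MulAut.conj_eq_one_iff_mem_center {G : Type*} [Group G] {g : G} :
    MulAut.conj g = 1 ↔ g ∈ Subgroup.center G := by
  simp only [MulEquiv.ext_iff, MulAut.conj_apply, MulAut.one_apply, Subgroup.mem_center_iff]
  exact forall_congr' fun _ => mul_inv_eq_iff_eq_mul.trans eq_comm

theorem MulAut.conj_apply_of_commute {G : Type*} [Group G] {g h : G} (hgh : g * h = h * g) :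
    MulAut.conj g h = h := by
  rw [MulAut.conj_apply, hgh, mul_inv_cancel_right]

namespace Set

variable {M : Type*} [Mul M] {A T : Set M}

theorem mul_mul_mem_of_mul_eq (hl : A * T = T) (hr : T * A = T) {a b s : M}
    (ha : a ∈ A) (hs : s ∈ T) (hb : b ∈ A) : a * s * b ∈ T := by
  rw [← hr, ← hl]
  exact mul_mem_mul (mul_mem_mul ha hs) hb

theorem mul_singleton_mul_subset_of_mul_eq (hl : A * T = T) (hr : T * A = T) {s : M}
    (hs : s ∈ T) : A * {s} * A ⊆ T := by
  rintro _ ⟨_, ⟨a, ha, _, rfl, rfl⟩, b, hb, rfl⟩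
  exact mul_mul_mem_of_mul_eq hl hr ha hs hb

end Set

section DoubleCosetStable

variable {R : Type*} [Group R] {S : Set R} {K H : Subgroup R}

theorem conj_mapsTo_of_mem_of_commute
    (h1 : (K : Set R) * (S \ (H : Set R)) = S \ (H : Set R))
    (h2 : (S \ (H : Set R)) * (K : Set R) = S \ (H : Set R))
    {g : R} (hgK : g ∈ K) (hgZH : ∀ h ∈ H, g * h = h * g) :
    Set.MapsTo (MulAut.conj g) S S := by
  intro s hs
  by_cases hsH : s ∈ H
  · rwa [MulAut.conj_apply_of_commute (hgZH s hsH)]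
  · rw [MulAut.conj_apply]
    exact (Set.mul_mul_mem_of_mul_eq h1 h2 hgK ⟨hs, hsH⟩ (inv_mem hgK)).1

theorem conj_image_eq_of_mem_of_commute
    (h1 : (K : Set R) * (S \ (H : Set R)) = S \ (H : Set R))
    (h2 : (S \ (H : Set R)) * (K : Set R) = S \ (H : Set R))
    {g : R} (hgK : g ∈ K) (hgZH : ∀ h ∈ H, g * h = h * g) :
    MulAut.conj g '' S = S := by
  have hg'ZH : ∀ h ∈ H, g⁻¹ * h = h * g⁻¹ := fun h hh =>
    (Commute.inv_left (hgZH h hh)).eq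
  refine (conj_mapsTo_of_mem_of_commute h1 h2 hgK hgZH).image_subset.antisymm fun s hs => ?_
  exact ⟨MulAut.conj g⁻¹ s, conj_mapsTo_of_mem_of_commute h1 h2 (inv_mem hgK) hg'ZH hs,
    by simp [MulAut.conj_apply, mul_assoc]⟩

end DoubleCosetStable

theorem stmt4_general {R : Type*} [Group R] (S : Set R) (K H : Subgroup R) (k : R)
    (h1 : (K : Set R) * (S \ (H : Set R)) = S \ (H : Set R))
    (h2 : (S \ (H : Set R)) * (K : Set R) = S \ (H : Set R))
    (hkK : k ∈ K) (hkZH : ∀ h ∈ H, k * h = h * k)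
    (hkZR : k ∉ Subgroup.center R) :
    ∃ φ : MulAut R,
      (∀ r_ : R, φ r_ = k⁻¹ * r_ * k) ∧
      φ ≠ 1 ∧
      φ '' S = S ∧
      (∀ h ∈ H, φ h = h) ∧
      (∀ s ∈ S \ (H : Set R),
        φ s ∈ (K : Set R) * {s} * (K : Set R) ∧ (K : Set R) * {s} * (K : Set R) ⊆ S) := by
  have hk'K : k⁻¹ ∈ K := inv_mem hkK
  have hk'ZH : ∀ h ∈ H, k⁻¹ * h = h * k⁻¹ := fun h hh => (Commute.inv_left (hkZH h hh)).eq
  refine ⟨MulAut.conj k⁻¹, fun r => by rw [MulAut.conj_apply, inv_inv], ?_,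
    conj_image_eq_of_mem_of_commute h1 h2 hk'K hk'ZH,
    fun h hh => MulAut.conj_apply_of_commute (hk'ZH h hh), fun s hs => ⟨?_, ?_⟩⟩
  · rwa [Ne, MulAut.conj_eq_one_iff_mem_center, Subgroup.inv_mem_iff]
  · rw [MulAut.conj_apply, inv_inv]
    exact Set.mul_mem_mul (Set.mul_mem_mul hk'K rfl) hkK
  · exact fun x hx => (Set.mul_singleton_mul_subset_of_mul_eq h1 h2 hs hx).1

/-- if `k ∈ (Z(H) ∩ K) \ Z(R)`, conjugation by `k` is a nontrivial
automorphism of `R` fixing `S` setwise; it fixes `H` pointwise and maps each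
`s ∈ S \ H` into `KsK ⊆ S`. -/
theorem stmt4 {R : Type*} [Group R] (S : Set R) (K H : Subgroup R) (k : R)
    (hK : ⊥ < K) (hKH : K ≤ H)
    (hnorm : ∀ h ∈ H, ∀ k' ∈ K, h * k' * h⁻¹ ∈ K)
    (hH : H < ⊤)
    (h1 : (K : Set R) * (S \ (H : Set R)) = S \ (H : Set R))
    (h2 : (S \ (H : Set R)) * (K : Set R) = S \ (H : Set R))
    (hkK : k ∈ K) (hkZH : ∀ h ∈ H, k * h = h * k)
    (hkZR : k ∉ Subgroup.center R) :
    ∃ φ : MulAut R,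
      (∀ r_ : R, φ r_ = k⁻¹ * r_ * k) ∧
      φ ≠ 1 ∧
      φ '' S = S ∧
      (∀ h ∈ H, φ h = h) ∧
      (∀ s ∈ S \ (H : Set R),
        φ s ∈ (K : Set R) * {s} * (K : Set R) ∧ (K : Set R) * {s} * (K : Set R) ⊆ S) :=
  stmt4_general S K H k h1 h2 hkK hkZH hkZR
end

section
/- Let r ∈ {3,5}, let D be the dihedral group of order 2r, and let S ⊆ D with S = S⁻¹. Then there exists a nontrivial automorphism β of D with β(S) = S such that β inverts every element of the cyclic subgroup of order r of D. -/
/-!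
Conjugation by a reflection `sr k` inverts the rotations and sends `sr i` to `sr (2k - i)`.
Since `S` is inverse-closed, it is stable under such a conjugation exactly when
`T = {i | sr i ∈ S} ⊆ ZMod n` is symmetric under `i ↦ 2k - i`. When `n ≤ 5`, either `T` or its
complement has at most two elements, and `{a, c}` is symmetric under `i ↦ (a + c) - i`; for odd `n`
every `b` in `ZMod n` is of the form `2k`. For `n > 2` the conjugation is nontrivial because `-1 ≠ 1` in `ZMod n`.
-/

open DihedralGroup

section Reflection

variable {G : Type*} [AddCommGroup G]

theorem exists_sub_mem_of_ncard_le_two {T : Set G} (hT : T.ncard ≤ 2) (hfin : T.Finite) :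
    ∃ b, ∀ i ∈ T, b - i ∈ T := by
  interval_cases h : T.ncard
  · rw [Set.ncard_eq_zero hfin] at h
    simp [h]
  · obtain ⟨a, rfl⟩ := Set.ncard_eq_one.mp h
    exact ⟨a + a, by simp⟩
  · obtain ⟨a, c, -, rfl⟩ := Set.ncard_eq_two.mp h
    refine ⟨a + c, ?_⟩
    rintro i (rfl | rfl) <;> simp

theorem sub_mem_compl_of_forall_sub_mem {T : Set G} {b : G} (hb : ∀ i ∈ T, b - i ∈ T) :
    ∀ i ∈ Tᶜ, b - i ∈ Tᶜ := fun i hi hbi => hi (by simpa using hb _ hbi)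

theorem exists_sub_mem_of_card_le_five [Finite G] (hG : Nat.card G ≤ 5) (T : Set G) :
    ∃ b, ∀ i ∈ T, b - i ∈ T := by
  have hcard := Set.ncard_add_ncard_compl T
  by_cases hT : T.ncard ≤ 2
  · exact exists_sub_mem_of_ncard_le_two hT T.toFinite
  · obtain ⟨b, hb⟩ := exists_sub_mem_of_ncard_le_two (T := Tᶜ) (by omega) Tᶜ.toFinite
    exact ⟨b, by simpa using sub_mem_compl_of_forall_sub_mem hb⟩

end Reflection

theorem ZMod.exists_two_mul_eq_of_odd {n : ℕ} (hn : Odd n) (b : ZMod n) : ∃ k, 2 * k = b := by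
  obtain ⟨m, rfl⟩ := hn
  refine ⟨(m + 1) * b, ?_⟩
  have : ((2 * m + 1 : ℕ) : ZMod (2 * m + 1)) = 0 := ZMod.natCast_self _
  push_cast at this
  linear_combination b * this

namespace DihedralGroup

variable {n : ℕ}

theorem conj_sr_r (k j : ZMod n) : MulAut.conj (sr k) (r j) = r (-j) := by
  simp [sub_eq_add_neg, add_comm]

theorem conj_sr_sr (k i : ZMod n) : MulAut.conj (sr k) (sr i) = sr (2 * k - i) := by
  rw [MulAut.conj_apply, inv_sr, sr_mul_sr, r_mul_sr]
  ring_nf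

theorem conj_sr_involutive (k : ZMod n) : Function.Involutive (MulAut.conj (sr k)) := fun g => by
  rw [← MulAut.mul_apply, ← map_mul, sr_mul_self, map_one, MulAut.one_apply]

end DihedralGroup

theorem image_eq_of_mapsTo_of_involutive {α : Type*} {f : α → α} {S : Set α}
    (hf : f.Involutive) (hS : Set.MapsTo f S S) : f '' S = S :=
  hS.image_subset.antisymm fun x hx => ⟨f x, hS hx, hf x⟩

/-- for `r ∈ {3,5}` and any inverse-closed subset `S` of the dihedral group
of order `2r`, some nontrivial automorphism fixing `S` setwise inverts every element of
the cyclic subgroup of order `r`. -/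
theorem stmt6 (n : ℕ) (hn : n = 3 ∨ n = 5) (S : Set (DihedralGroup n))
    (hS : S⁻¹ = S) :
    ∃ β : MulAut (DihedralGroup n), β ≠ 1 ∧ β '' S = S ∧
      ∀ j : ZMod n, β (DihedralGroup.r j) = (DihedralGroup.r j)⁻¹ := by
  have : Fact (2 < n) := ⟨by omega⟩
  have : NeZero n := ⟨by omega⟩
  have hodd : Odd n := by rcases hn with rfl | rfl <;> decide
  obtain ⟨b, hb⟩ := exists_sub_mem_of_card_le_five (G := ZMod n) (by rw [Nat.card_zmod]; omega)
    {i | sr i ∈ S}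
  obtain ⟨k, rfl⟩ := ZMod.exists_two_mul_eq_of_odd hodd b
  refine ⟨MulAut.conj (sr k), fun h => ZMod.neg_one_ne_one (n := n) ?_, ?_,
    fun j => by rw [conj_sr_r, inv_r]⟩
  · simpa [conj_sr_r] using DFunLike.congr_fun h (r 1)
  · refine image_eq_of_mapsTo_of_involutive (conj_sr_involutive k) ?_
    rintro (j | i) hg
    · rw [conj_sr_r, ← inv_r, ← hS, Set.inv_mem_inv]
      exact hg
    · rw [conj_sr_sr]
      exact hb i hg
end

section
/- Every group of prime order p is DRR-detecting: for any S ⊆ C_p, if the only automorphism of C_p fixing S setwise is the identity, then the automorphism group of Cay(C_p, S) is exactly the regular group of order p. -/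
/-!
The right translations form a subgroup `P ≅ R` of order `p` of `G = Aut(Cay(R, S))`. An element
of `G` that normalizes `P` and fixes `1` is a group automorphism of `R` preserving `S`, hence
trivial; so `N_G(P) = P`, which is abelian. As `G` acts faithfully on `p` points, `P` is a Sylow
subgroup, and Burnside's transfer theorem gives a normal complement `K` of order prime to `p`.
A transitive action on `p` points is primitive, so the normal subgroup `K` acts either trivially
or transitively; the latter would force `p ∣ |K|`. Hence `K = 1` and `G = P`.
-/

open Equiv MulAction Subgroup

section PrimeDegree

variable {G X : Type*} [Group G] [MulAction G X] [FaithfulSMul G X]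

theorem card_dvd_factorial_of_faithfulSMul [Finite X] : Nat.card G ∣ (Nat.card X).factorial := by
  rw [← Nat.card_perm]
  exact card_dvd_of_injective (toPermHom G X) toPerm_injective

theorem not_dvd_index_of_card_eq_prime [Finite X] {p : ℕ} (hp : p.Prime) (hX : Nat.card X = p)
    {H : Subgroup G} (hH : Nat.card H = p) : ¬ p ∣ H.index := by
  have hdvd : p * H.index ∣ p * (p - 1).factorial := by
    rw [← hH, card_mul_index, hH, Nat.mul_factorial_pred hp.ne_zero, ← hX]
    exact card_dvd_factorial_of_faithfulSMul
  intro hp_dvd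
  exact (Nat.sub_one_lt hp.ne_zero).not_ge
    (hp.dvd_factorial.mp (hp_dvd.trans (Nat.dvd_of_mul_dvd_mul_left hp.pos hdvd)))

theorem eq_bot_of_normal_of_not_card_dvd [IsQuasiPreprimitive G X] (N : Subgroup G)
    [N.Normal] (hN : ¬ Nat.card X ∣ Nat.card N) : N = ⊥ := by
  by_cases hfix : fixedPoints N X = Set.univ
  · rw [eq_bot_iff_forall]
    intro n hn
    exact eq_of_smul_eq_smul fun x => by
      rw [one_smul]
      exact (Set.ext_iff.mp hfix x).mpr trivial ⟨n, hn⟩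
  · have := IsQuasiPreprimitive.isPretransitive_of_normal hfix
    obtain ⟨x, -⟩ := Set.nonempty_compl.mpr hfix
    exact absurd (index_stabilizer_of_transitive N x ▸ index_dvd_card _) hN

theorem eq_top_of_normalizer_le_centralizer [Finite G] [IsPretransitive G X] {p : ℕ}
    (hp : p.Prime) (hX : Nat.card X = p) {H : Subgroup G} (hH : Nat.card H = p)
    (hN : normalizer (H : Set G) ≤ centralizer (H : Set G)) : H = ⊤ := by
  have : Fact p.Prime := ⟨hp⟩
  have : Finite X := Nat.finite_of_card_ne_zero (hX ▸ hp.ne_zero)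
  have : IsPreprimitive G X := .of_prime_card (hX ▸ hp)
  let P : Sylow p G := (IsPGroup.of_card (n := 1) (by rw [hH, pow_one])).toSylow
    (not_dvd_index_of_card_eq_prime hp hX hH)
  have hK := MonoidHom.ker_transferSylow_isComplement' P hN
  rwa [eq_bot_of_normal_of_not_card_dvd (X := X) (MonoidHom.transferSylow P hN).ker
    (hX ▸ MonoidHom.not_dvd_card_ker_transferSylow P hN), isComplement'_bot_left] at hK

end PrimeDegree

section Cayley

variable {R : Type*} [Group R]

def rightRegular : R →* Perm R where
  toFun r := Equiv.mulRight r⁻¹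
  map_one' := by ext; simp
  map_mul' r s := by ext; simp [mul_assoc]

@[simp]
theorem rightRegular_apply (r x : R) : rightRegular r x = x * r⁻¹ := rfl

def cayleyAut (S : Set R) : Subgroup (Perm R) where
  carrier := {f | ∀ x y : R, x * y⁻¹ ∈ S ↔ f x * (f y)⁻¹ ∈ S}
  one_mem' _ _ := Iff.rfl
  mul_mem' hf hg x y := (hg x y).trans (hf _ _)
  inv_mem' {f} hf x y := by simpa using (hf (f⁻¹ x) (f⁻¹ y)).symm

variable (S : Set R)

theorem rightRegular_mem_cayleyAut (r : R) : rightRegular r ∈ cayleyAut S := fun x y => by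
  simp [mul_assoc]

def cayleyRegular : R →* cayleyAut S :=
  rightRegular.codRestrict _ (rightRegular_mem_cayleyAut S)

@[simp]
theorem coe_cayleyRegular (r : R) : (cayleyRegular S r : Perm R) = rightRegular r := rfl

theorem cayleyRegular_injective : Function.Injective (cayleyRegular S) := fun r s h => by
  simpa using congrArg (fun g : cayleyAut S => (g : Perm R) 1) h

theorem card_range_cayleyRegular : Nat.card (cayleyRegular S).range = Nat.card R :=
  (Nat.card_congr (MonoidHom.ofInjective (cayleyRegular_injective S)).toEquiv).symm

instance : IsPretransitive (cayleyAut S) R :=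
  ⟨fun x y => ⟨cayleyRegular S (y⁻¹ * x), show x * (y⁻¹ * x)⁻¹ = y by group⟩⟩

variable {S}

theorem map_mul_of_conj_rightRegular {g : Perm R} (h1 : g 1 = 1)
    (hg : ∀ r, ∃ s, g * rightRegular r = rightRegular s * g) (a b : R) :
    g (a * b) = g a * g b := by
  obtain ⟨s, hs⟩ := hg b⁻¹
  have hx : ∀ x, g (x * b) = g x * s⁻¹ := fun x => by
    simpa only [Perm.mul_apply, rightRegular_apply, inv_inv] using Perm.ext_iff.mp hs x
  rw [hx, ← one_mul b, hx, h1, one_mul]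

theorem eq_one_of_mem_cayleyAut (hfix : ∀ φ : MulAut R, φ '' S = S → φ = 1) {g : Perm R}
    (hg : g ∈ cayleyAut S) (h1 : g 1 = 1) (hmul : ∀ a b, g (a * b) = g a * g b) : g = 1 := by
  have hS : ∀ x, x ∈ S ↔ g x ∈ S := by simpa [h1] using fun x => hg x 1
  let φ : MulAut R := .mk' g hmul
  have hφ : φ = 1 := hfix φ <| Set.ext fun y => by
    obtain ⟨x, rfl⟩ := g.surjective y
    exact φ.injective.mem_set_image.trans (hS x)
  ext x
  exact congrArg (fun φ : MulAut R => φ x) hφ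

theorem eq_one_of_mem_normalizer (hfix : ∀ φ : MulAut R, φ '' S = S → φ = 1)
    {g : cayleyAut S} (hg : g ∈ normalizer ((cayleyRegular S).range : Set (cayleyAut S)))
    (h1 : (g : Perm R) 1 = 1) : g = 1 := by
  have hconj : ∀ r, ∃ s, (g : Perm R) * rightRegular r = rightRegular s * (g : Perm R) :=
    fun r => by
      obtain ⟨s, hs⟩ := (mem_normalizer_iff.mp hg (cayleyRegular S r)).mp ⟨r, rfl⟩
      refine ⟨s, ?_⟩
      simpa only [Subgroup.coe_mul, coe_cayleyRegular] using
        congrArg Subtype.val (eq_mul_inv_iff_mul_eq.mp hs).symm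
  exact Subtype.ext (eq_one_of_mem_cayleyAut hfix g.2 h1 (map_mul_of_conj_rightRegular h1 hconj))

theorem normalizer_range_cayleyRegular_le (hfix : ∀ φ : MulAut R, φ '' S = S → φ = 1) :
    normalizer ((cayleyRegular S).range : Set (cayleyAut S)) ≤ (cayleyRegular S).range := by
  intro g hg
  set c := (g : Perm R) 1
  have := eq_one_of_mem_normalizer hfix (mul_mem (le_normalizer ⟨c, rfl⟩) hg) (by simp [c])
  rw [eq_inv_of_mul_eq_one_right this]
  exact ⟨c⁻¹, map_inv _ c⟩

end Cayley

/-- groups of prime order are DRR-detecting: if no nontrivial automorphism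
fixes `S` setwise, then every automorphism of `Cay(R,S)` is a right translation. -/
theorem stmt9 {R : Type*} [Group R] [Finite R] (p : ℕ) (hp : p.Prime)
    (hcard : Nat.card R = p) (S : Set R)
    (hfix : ∀ φ : MulAut R, φ '' S = S → φ = 1) :
    ∀ f : Equiv.Perm R, (∀ x y : R, x * y⁻¹ ∈ S ↔ f x * (f y)⁻¹ ∈ S) →
      ∃ r : R, ∀ v : R, f v = v * r := by
  intro f hf
  have : Fact p.Prime := ⟨hp⟩
  have : IsCyclic R := isCyclic_of_prime_card hcard
  have hP : (cayleyRegular S).range = ⊤ :=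
    eq_top_of_normalizer_le_centralizer hp hcard ((card_range_cayleyRegular S).trans hcard)
      ((normalizer_range_cayleyRegular_le hfix).trans (le_centralizer _))
  obtain ⟨r, hr⟩ : (⟨f, hf⟩ : cayleyAut S) ∈ (cayleyRegular S).range := hP ▸ mem_top _
  exact ⟨r⁻¹, fun v => (congrArg (fun g : cayleyAut S => (g : Perm R) v) hr).symm⟩
end

section
/- Let R be a group of squarefree order isomorphic to C_n ⋊ C_m with trivial center, such that for every pair of primes p | m and q | n, every subgroup of R of order pq is nonabelian. Let H be a characteristic subgroup of prime index in R. If m is not prime, then the centralizer of H in Aut(R) is trivial. -/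
/-!
Let `p` be the index of `H`. As `R ⧸ H` is abelian, `H` contains all commutators, and since
`|R|` is squarefree `H` contains no element of order `p`. So for `y` of order `p` in the
abelian normal subgroup `N`, every commutator `⁅g, y⁆` lies in `N ∩ H` and has order dividing
`p`, hence is trivial; `y` would be central. Thus `p ∤ n`, `N ≤ H` and `p ∣ m`. Since `m` is
squarefree and not prime, `M` contains an element `x` of order `p`, so `x ∉ H` and `H`, `x`
generate `R`, and an element `x' ∈ H` of a different prime order.

If `φ` fixes `H` pointwise, `c = x⁻¹ φ(x)` commutes with every `w ∈ H` such that
`x w x⁻¹ ∈ H`, in particular with `N` and with `x'`. A power of `c` of prime order would then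
commute with an element of coprime prime order taken from `N` or `M`, spanning an abelian
subgroup of order `pq`. Hence `c = 1`, and `φ` fixes both `H` and `x`.
-/

open Subgroup
open scoped commutatorElement

section

variable {G : Type*} [Group G]

theorem Subgroup.exists_mem_orderOf_eq_prime [Finite G] (K : Subgroup G) {p : ℕ} (hp : p.Prime)
    (hpK : p ∣ Nat.card K) : ∃ g ∈ K, orderOf g = p := by
  have : Fact p.Prime := ⟨hp⟩
  obtain ⟨⟨g, hgK⟩, hg⟩ := exists_prime_orderOf_dvd_card' p hpK
  exact ⟨g, hgK, (orderOf_mk g hgK).symm.trans hg⟩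

theorem Subgroup.eq_top_of_lt_of_index_prime {H K : Subgroup G} (hH : H.index.Prime)
    (hHK : H < K) : K = ⊤ := by
  have : H.FiniteIndex := ⟨hH.ne_zero⟩
  rcases hH.eq_one_or_self_of_dvd _ (index_dvd_of_le hHK.le) with h | h
  · exact index_eq_one.mp h
  · exact absurd h (index_strictAnti hHK).ne

theorem Subgroup.mem_of_coprime_orderOf_index {H : Subgroup G} [H.Normal] {g : G}
    (h : (orderOf g).Coprime H.index) : g ∈ H := by
  rw [← QuotientGroup.eq_one_iff, ← orderOf_eq_one_iff]
  exact Nat.eq_one_of_dvd_coprimes h (orderOf_map_dvd (QuotientGroup.mk' H) g)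
    (H.index_eq_card ▸ _root_.orderOf_dvd_natCard _)

theorem Subgroup.commutatorElement_mem_of_index_prime {H : Subgroup G} [H.Normal]
    (hH : H.index.Prime) (g y : G) : ⁅g, y⁆ ∈ H := by
  have : Fact H.index.Prime := ⟨hH⟩
  have : IsCyclic (G ⧸ H) := isCyclic_of_prime_card H.index_eq_card.symm
  exact Normal.quotient_commutative_iff_commutator_le.mp inferInstance
    (commutator_mem_commutator (mem_top g) (mem_top y))

theorem Subgroup.not_index_dvd_orderOf_of_mem [Finite G] (hG : Squarefree (Nat.card G))
    {H : Subgroup G} (hH : H.index.Prime) {g : G} (hg : g ∈ H) : ¬ H.index ∣ orderOf g :=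
  fun hdvd => hH.ne_one <| Nat.isUnit_iff.mp <| hG _ <|
    H.card_mul_index ▸ mul_dvd_mul_right (hdvd.trans (H.orderOf_dvd_natCard hg)) _

theorem Subgroup.not_index_dvd_card_of_center_eq_bot [Finite G] (hG : Squarefree (Nat.card G))
    (hZ : center G = ⊥) {H N : Subgroup G} [H.Normal] [N.Normal] [IsMulCommutative N]
    (hH : H.index.Prime) : ¬ H.index ∣ Nat.card N := by
  intro hdvd
  obtain ⟨y, hyN, hy⟩ := N.exists_mem_orderOf_eq_prime hH hdvd
  have hcomm : ∀ g : G, ⁅g, y⁆ = 1 := by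
    intro g
    by_contra hne
    have hconj : g * y * g⁻¹ ∈ N := Normal.conj_mem ‹_› y hyN g
    have hpow : ⁅g, y⁆ ^ H.index = 1 := by
      have hc : Commute (g * y * g⁻¹) y⁻¹ := setLike_mul_comm hconj (inv_mem hyN)
      rw [commutatorElement_def, hc.mul_pow,
        conj_pow, ← hy, pow_orderOf_eq_one, inv_pow, pow_orderOf_eq_one]
      group
    have : Fact H.index.Prime := ⟨hH⟩
    exact not_index_dvd_orderOf_of_mem hG hH (commutatorElement_mem_of_index_prime hH g y)
      (orderOf_eq_prime hpow hne).symm.dvd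
  have hyZ : y ∈ center G :=
    mem_center_iff.mpr fun g => commutatorElement_eq_one_iff_commute.mp (hcomm g)
  rw [hZ, mem_bot] at hyZ
  exact hH.ne_one (by rw [← hy, hyZ, orderOf_one])

theorem Subgroup.ne_top_of_center_eq_bot [Nontrivial G] (hZ : center G = ⊥) (M : Subgroup G)
    [IsMulCommutative M] : M ≠ ⊤ := by
  rintro rfl
  have hZtop : center G = ⊤ :=
    eq_top_iff.mpr fun g _ => mem_center_iff.mpr fun h => setLike_mul_comm (mem_top h) (mem_top g)
  exact bot_ne_top (hZ.symm.trans hZtop)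

theorem Commute.exists_card_eq_orderOf_mul {a b : G} (hab : Commute a b)
    (hco : (orderOf a).Coprime (orderOf b)) :
    ∃ X : Subgroup G, Nat.card X = orderOf a * orderOf b ∧ ∀ u v : X, u * v = v * u :=
  ⟨zpowers (a * b), by rw [Nat.card_zpowers, hab.orderOf_mul_eq_mul_orderOf_of_coprime hco],
    fun u v => Subtype.ext (setLike_mul_comm u.2 v.2)⟩

theorem MulAut.commute_inv_mul_apply {φ : MulAut G} {x w : G} (hw : φ w = w)
    (hxw : φ (x * w * x⁻¹) = x * w * x⁻¹) : Commute (x⁻¹ * φ x) w := by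
  rw [map_mul, map_mul, map_inv, hw] at hxw
  calc x⁻¹ * φ x * w = x⁻¹ * (φ x * w * (φ x)⁻¹) * φ x := by group
    _ = w * (x⁻¹ * φ x) := by rw [hxw]; group

theorem MulAut.eq_one_of_index_prime {H : Subgroup G} (hH : H.index.Prime) {φ : MulAut G}
    (hφH : ∀ h ∈ H, φ h = h) {x : G} (hxH : x ∉ H) (hφx : φ x = x) : φ = 1 := by
  have htop := H.eq_top_of_lt_of_index_prime hH
    (SetLike.lt_iff_le_and_exists.mpr ⟨hφH, x, hφx, hxH⟩ :
      H < φ.toMonoidHom.eqLocus (MonoidHom.id G))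
  ext g
  exact (htop ▸ mem_top g : g ∈ φ.toMonoidHom.eqLocus (MonoidHom.id G))

theorem Nat.exists_prime_ne_dvd_of_squarefree {m p : ℕ} (hm : Squarefree m) (hmp : ¬ m.Prime)
    (hp : p.Prime) (hpm : p ∣ m) : ∃ q, q.Prime ∧ q ∣ m ∧ q ≠ p := by
  obtain ⟨k, rfl⟩ := hpm
  have hk : k ≠ 1 := by rintro rfl; exact hmp (by rwa [mul_one])
  refine ⟨k.minFac, minFac_prime hk, dvd_mul_of_dvd_right k.minFac_dvd p, fun h => ?_⟩
  exact hp.ne_one (Nat.isUnit_iff.mp (hm p (mul_dvd_mul_left p (h ▸ k.minFac_dvd))))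

section NonabelianPrimeProducts

variable {n m : ℕ} (hcop : n.Coprime m)
  (hnonab : ∀ p q : ℕ, p.Prime → q.Prime → p ∣ m → q ∣ n →
    ∀ X : Subgroup G, Nat.card X = p * q → ¬ ∀ a b : X, a * b = b * a)
include hcop hnonab

theorem not_commute_of_orderOf_prime_dvd {a b : G} (ha : (orderOf a).Prime)
    (han : orderOf a ∣ n) (hb : (orderOf b).Prime) (hbm : orderOf b ∣ m) : ¬ Commute a b :=
  fun hab => by
    obtain ⟨X, hX, hXcomm⟩ := hab.symm.exists_card_eq_orderOf_mul
      (Nat.Coprime.coprime_dvd_left hbm (hcop.symm.coprime_dvd_right han))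
    exact hnonab _ _ hb ha hbm han X hX hXcomm

theorem eq_one_of_commute_of_orderOf_prime_dvd [Finite G] (hcard : Nat.card G = n * m)
    {y x c : G} (hy : (orderOf y).Prime) (hyn : orderOf y ∣ n) (hx : (orderOf x).Prime)
    (hxm : orderOf x ∣ m) (hcy : Commute c y) (hcx : Commute c x) : c = 1 := by
  by_contra hc
  obtain ⟨q, hq, hqc⟩ := Nat.exists_prime_and_dvd (orderOf_eq_one_iff.not.mpr hc)
  obtain ⟨d, hdc, hd⟩ := (zpowers c).exists_mem_orderOf_eq_prime hq (Nat.card_zpowers c ▸ hqc)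
  obtain ⟨k, rfl⟩ := mem_zpowers_iff.mp hdc
  rcases (Nat.Prime.dvd_mul hq).mp (hcard ▸ hqc.trans (orderOf_dvd_natCard c)) with hqn | hqm
  · exact not_commute_of_orderOf_prime_dvd hcop hnonab (hd ▸ hq) (hd ▸ hqn) hx hxm
      (hcx.zpow_left k)
  · exact not_commute_of_orderOf_prime_dvd hcop hnonab hy hyn (hd ▸ hq) (hd ▸ hqm)
      (hcy.zpow_left k).symm

end NonabelianPrimeProducts

end

theorem stmt10_general {R : Type*} [Group R] [Finite R] (n m : ℕ)
    (hsf : Squarefree (Nat.card R)) (hcard : Nat.card R = n * m)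
    (hZ : Subgroup.center R = ⊥)
    (N M : Subgroup R) (hNnorm : N.Normal) (hNcyc : IsCyclic N) (hNcard : Nat.card N = n)
    (hMcyc : IsCyclic M) (hMcard : Nat.card M = m)
    (hnonab : ∀ p q : ℕ, p.Prime → q.Prime → p ∣ m → q ∣ n →
      ∀ X : Subgroup R, Nat.card X = p * q → ¬ ∀ a b : X, a * b = b * a)
    (H : Subgroup R) [H.Characteristic] (hHidx : (H.index).Prime)
    (hm : ¬ m.Prime) :
    ∀ φ : MulAut R, (∀ h ∈ H, φ h = h) → φ = 1 := by
  intro φ hφ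
  obtain ⟨hcop, -, hmsf⟩ := Nat.squarefree_mul_iff.mp (hcard ▸ hsf)
  have hpn : ¬ H.index ∣ n := hNcard ▸ not_index_dvd_card_of_center_eq_bot hsf hZ hHidx
  have hNH : N ≤ H := fun w hw => mem_of_coprime_orderOf_index <|
    Nat.Coprime.coprime_dvd_left (hNcard ▸ N.orderOf_dvd_natCard hw)
      ((Nat.Prime.coprime_iff_not_dvd hHidx).mpr hpn).symm
  have hpm : H.index ∣ m :=
    ((Nat.Prime.dvd_mul hHidx).mp (hcard ▸ H.index_dvd_card)).resolve_left hpn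
  obtain ⟨p', hp', hp'm, hp'p⟩ := Nat.exists_prime_ne_dvd_of_squarefree hmsf hm hHidx hpm
  obtain ⟨x, hxM, hx⟩ := M.exists_mem_orderOf_eq_prime hHidx (hMcard ▸ hpm)
  obtain ⟨x', hx'M, hx'⟩ := M.exists_mem_orderOf_eq_prime hp' (hMcard ▸ hp'm)
  have hx'H : x' ∈ H :=
    mem_of_coprime_orderOf_index (hx' ▸ (Nat.coprime_primes hp' hHidx).mpr hp'p)
  have : Nontrivial R := Finite.one_lt_card_iff_nontrivial.mp <|
    hHidx.one_lt.trans_le (Nat.le_of_dvd Nat.card_pos H.index_dvd_card)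
  have hn : n ≠ 1 := fun hn => M.ne_top_of_center_eq_bot hZ <|
    M.eq_top_of_card_eq (by rw [hMcard, hcard, hn, one_mul])
  obtain ⟨y, hyN, hy⟩ :=
    N.exists_mem_orderOf_eq_prime (Nat.minFac_prime hn) (hNcard ▸ n.minFac_dvd)
  have hx'x : x * x' * x⁻¹ = x' := by rw [setLike_mul_comm hxM hx'M, mul_inv_cancel_right]
  have hφx : x⁻¹ * φ x = 1 := eq_one_of_commute_of_orderOf_prime_dvd hcop hnonab hcard
    (hy ▸ Nat.minFac_prime hn) (hy ▸ n.minFac_dvd) (hx' ▸ hp') (hx' ▸ hp'm)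
    (MulAut.commute_inv_mul_apply (hφ y (hNH hyN)) (hφ _ (hNH (hNnorm.conj_mem y hyN x))))
    (MulAut.commute_inv_mul_apply (hφ x' hx'H) (by rw [hx'x]; exact hφ x' hx'H))
  exact MulAut.eq_one_of_index_prime hHidx hφ
    (fun hxH => not_index_dvd_orderOf_of_mem hsf hHidx hxH hx.symm.dvd)
    (inv_mul_eq_one.mp hφx).symm

/-- Lemma on `C_n ⋊ C_m` of squarefree order with trivial center in which
every subgroup of order `pq` (`p ∣ m`, `q ∣ n` primes) is nonabelian: a characteristic
subgroup `H` of prime index has trivial centraliser in `Aut(R)` when `m` is not prime. -/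
theorem stmt10 {R : Type*} [Group R] [Finite R] (n m : ℕ)
    (hsf : Squarefree (Nat.card R)) (hcard : Nat.card R = n * m)
    (hZ : Subgroup.center R = ⊥)
    (N M : Subgroup R) (hNnorm : N.Normal) (hNcyc : IsCyclic N) (hNcard : Nat.card N = n)
    (hMcyc : IsCyclic M) (hMcard : Nat.card M = m)
    (hNM : N ⊓ M = ⊥) (hNMtop : N ⊔ M = ⊤)
    (hnonab : ∀ p q : ℕ, p.Prime → q.Prime → p ∣ m → q ∣ n →
      ∀ X : Subgroup R, Nat.card X = p * q → ¬ ∀ a b : X, a * b = b * a)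
    (H : Subgroup R) [H.Characteristic] (hHidx : (H.index).Prime)
    (hm : ¬ m.Prime) :
    ∀ φ : MulAut R, (∀ h ∈ H, φ h = h) → φ = 1 :=
  stmt10_general n m hsf hcard hZ N M hNnorm hNcyc hNcard hMcyc hMcard hnonab H hHidx hm
end

section
/- Let r ∈ {3,5}, let q be an odd prime distinct from r, and let R = C_q × D_{2r} = ⟨z⟩ × (⟨y⟩ ⋊ ⟨x⟩) with |z| = q, |y| = r, |x| = 2. Let S ⊆ R with S = S⁻¹. Suppose H = ⟨x, z⟩ ≅ C_{2q}, K = ⟨z⟩ ≅ C_q, and K(S\H) = S\H. Then the map α defined by (x^i y^j z^k)^α = x^i y^j z^{−k} is an automorphism of R fixing S setwise, and α ≠ 1. -/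
/-!
Inverting the `C_q` coordinate is the automorphism `α = inv × id` of `A × B` (`A` abelian).
On `H = ⟨x, z⟩` it is inversion, because the `D_{2r}`-coordinates of elements of `H` are `1`
or the involution `x`; so `α` preserves `S ∩ H` as `S = S⁻¹`. Off `H` it multiplies by an element
of `K = C_q × 1`, namely `α (c, d) = (c⁻², 1) (c, d)`, so it preserves `S \ H = K(S \ H)`.
It is nontrivial since `z⁻¹ ≠ z` for `q > 2`.
-/

open scoped Pointwise

theorem Function.Involutive.image_eq_of_mapsTo {α : Type*} {f : α → α} {s : Set α}
    (hf : f.Involutive) (h : Set.MapsTo f s s) : f '' s = s :=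
  h.image_subset.antisymm fun x hx => ⟨f x, h hx, hf x⟩

theorem Set.mapsTo_of_eq_inv_on_of_mem_mul {G : Type*} [Group G] {S H K : Set G}
    (hS : S⁻¹ = S) (hK : K * (S \ H) = S \ H) {f : G → G}
    (hfH : ∀ g ∈ H, f g = g⁻¹) (hfK : ∀ g, ∃ k ∈ K, f g = k * g) : Set.MapsTo f S S := by
  intro g hg
  by_cases hgH : g ∈ H
  · rw [hfH g hgH, ← hS]
    exact Set.inv_mem_inv.mpr hg
  · obtain ⟨k, hk, hfg⟩ := hfK g
    have : f g ∈ K * (S \ H) := hfg ▸ Set.mul_mem_mul hk ⟨hg, hgH⟩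
    exact (hK ▸ this).1

theorem Prod.snd_eq_one_or_eq_of_mem_closure {A B : Type*} [Group A] [Group B] {a : A} {b : B}
    (hb : b * b = 1) {g : A × B} (hg : g ∈ Subgroup.closure {(1, b), (a, 1)}) :
    g.2 = 1 ∨ g.2 = b := by
  have hb' : b⁻¹ = b := inv_eq_of_mul_eq_one_left hb
  induction hg using Subgroup.closure_induction with
  | mem g hg => rcases hg with rfl | rfl <;> simp
  | one => simp
  | mul g h _ _ hg hh =>
    rcases hg with hg | hg <;> rcases hh with hh | hh <;> simp [hg, hh, hb]
  | inv g _ hg => rcases hg with hg | hg <;> simp [hg, hb']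

theorem ZMod.prod_mem_closure_ofAdd_one {B : Type*} [Group B] {q : ℕ} [NeZero q]
    (c : Multiplicative (ZMod q)) :
    (c, (1 : B)) ∈ Subgroup.closure {(Multiplicative.ofAdd (1 : ZMod q), (1 : B))} := by
  have hc : (Multiplicative.ofAdd (1 : ZMod q), (1 : B)) ^ c.toAdd.val = (c, 1) := by
    rw [Prod.pow_mk, one_pow, ← ofAdd_nsmul, nsmul_one, ZMod.natCast_zmod_val]
    rfl
  rw [← hc]
  exact Subgroup.pow_mem _ (Subgroup.mem_closure_singleton_self _) _

section InvFst

variable {A B : Type*} [CommGroup A] [Group B]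

variable (A B) in
def invFst : MulAut (A × B) :=
  (MulEquiv.inv A).prodCongr (MulEquiv.refl B)

@[simp]
theorem invFst_apply (p : A × B) : invFst A B p = (p.1⁻¹, p.2) :=
  rfl

theorem invFst_involutive : Function.Involutive (invFst A B) := fun p => by
  simp

theorem invFst_eq_inv {p : A × B} (hp : p.2⁻¹ = p.2) : invFst A B p = p⁻¹ := by
  simp [Prod.ext_iff, hp]

theorem invFst_eq_mul (p : A × B) : invFst A B p = (p.1⁻¹ * p.1⁻¹, 1) * p := by
  simp [Prod.ext_iff, mul_assoc]

theorem invFst_ne_one {a : A} (ha : a⁻¹ ≠ a) : invFst A B ≠ 1 := fun h =>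
  ha congr($(DFunLike.congr_fun h (a, 1)).1)

end InvFst

theorem stmt15_general (n q : ℕ) (hq : q.Prime) (hqodd : Odd q)
    (S : Set (Multiplicative (ZMod q) × DihedralGroup n)) (hS : S⁻¹ = S)
    (H K : Subgroup (Multiplicative (ZMod q) × DihedralGroup n))
    (hH : H = Subgroup.closure
      {((1 : Multiplicative (ZMod q)), DihedralGroup.sr 0),
       (Multiplicative.ofAdd (1 : ZMod q), (1 : DihedralGroup n))})
    (hK : K = Subgroup.closure
      {(Multiplicative.ofAdd (1 : ZMod q), (1 : DihedralGroup n))})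
    (h1 : (K : Set (Multiplicative (ZMod q) × DihedralGroup n)) *
        (S \ (H : Set (Multiplicative (ZMod q) × DihedralGroup n))) =
      S \ (H : Set (Multiplicative (ZMod q) × DihedralGroup n))) :
    ∃ α : MulAut (Multiplicative (ZMod q) × DihedralGroup n),
      (∀ (c : Multiplicative (ZMod q)) (d : DihedralGroup n), α (c, d) = (c⁻¹, d)) ∧
      α '' S = S ∧ α ≠ 1 := by
  have : NeZero q := ⟨hq.ne_zero⟩
  have : Fact (2 < q) := ⟨lt_of_le_of_ne hq.two_le fun h => by subst h; exact absurd hqodd (by decide)⟩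
  have hfH : ∀ g ∈ (H : Set (Multiplicative (ZMod q) × DihedralGroup n)),
      invFst _ _ g = g⁻¹ := fun g hg => by
    rw [SetLike.mem_coe, hH] at hg
    rcases Prod.snd_eq_one_or_eq_of_mem_closure (DihedralGroup.sr_mul_self 0) hg with h | h <;>
      exact invFst_eq_inv (by simp [h, DihedralGroup.inv_sr])
  have hfK : ∀ g, ∃ k ∈ (K : Set (Multiplicative (ZMod q) × DihedralGroup n)),
      invFst _ _ g = k * g := fun g =>
    ⟨_, hK ▸ ZMod.prod_mem_closure_ofAdd_one _, invFst_eq_mul g⟩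
  refine ⟨invFst _ _, fun _ _ => rfl, invFst_involutive.image_eq_of_mapsTo
    (Set.mapsTo_of_eq_inv_on_of_mem_mul hS h1 hfH hfK), invFst_ne_one (a := .ofAdd 1) ?_⟩
  simpa [← ofAdd_neg] using ZMod.neg_one_ne_one

/-- in `R = C_q × D_{2r}` (`r ∈ {3,5}`, `q` an odd prime, `q ≠ r`),
with `H = ⟨x,z⟩ ≅ C_{2q}`, `K = ⟨z⟩ ≅ C_q` and `K(S\H) = S\H` for an inverse-closed
`S`, the map `x^i y^j z^k ↦ x^i y^j z^{-k}` is a nontrivial automorphism fixing `S`. -/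
theorem stmt15 (n q : ℕ) (hn : n = 3 ∨ n = 5) (hq : q.Prime) (hqodd : Odd q)
    (hqn : q ≠ n)
    (S : Set (Multiplicative (ZMod q) × DihedralGroup n)) (hS : S⁻¹ = S)
    (H K : Subgroup (Multiplicative (ZMod q) × DihedralGroup n))
    (hH : H = Subgroup.closure
      {((1 : Multiplicative (ZMod q)), DihedralGroup.sr 0),
       (Multiplicative.ofAdd (1 : ZMod q), (1 : DihedralGroup n))})
    (hK : K = Subgroup.closure
      {(Multiplicative.ofAdd (1 : ZMod q), (1 : DihedralGroup n))})
    (h1 : (K : Set (Multiplicative (ZMod q) × DihedralGroup n)) *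
        (S \ (H : Set (Multiplicative (ZMod q) × DihedralGroup n))) =
      S \ (H : Set (Multiplicative (ZMod q) × DihedralGroup n))) :
    ∃ α : MulAut (Multiplicative (ZMod q) × DihedralGroup n),
      (∀ (c : Multiplicative (ZMod q)) (d : DihedralGroup n), α (c, d) = (c⁻¹, d)) ∧
      α '' S = S ∧ α ≠ 1 :=
  stmt15_general n q hq hqodd S hS H K hH hK h1
end

section
/- If G₁ and G₂ are nontrivial finite groups of coprime orders, each admitting a DRR (digraphical regular representation), then G₁ × G₂ is not DRR-detecting: there exists S ⊆ G₁ × G₂ with Aut(G₁×G₂)_S = 1 but Aut(Cay(G₁×G₂, S)) strictly larger than the regular group. -/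
/-!
Take DRRs `Cay(Gᵢ, Sᵢ)` with `1 ∉ Sᵢ` and `S = S₁ × G₂ ∪ {1} × S₂`. Right-multiplying the
`G₂`-coordinate on a single `G₁`-fibre preserves every arc of `Cay(G₁ × G₂, S)` but is not a
translation. Conversely, coprimality makes every automorphism of `G₁ × G₂` a product `α × β`;
if it fixes `S`, then `α` fixes `S₁` and `β` fixes `S₂`. A group automorphism fixing the
connection set of a DRR is a digraph automorphism fixing `1`, hence trivial.
-/

section Cayley

variable {G : Type*} [Group G]

/-- `f` is an automorphism of the Cayley digraph `Cay(G, T)`, whose arcs are `y → x` for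
`x * y⁻¹ ∈ T`. -/
def IsCayleyAut (T : Set G) (f : Equiv.Perm G) : Prop :=
  ∀ x y : G, x * y⁻¹ ∈ T ↔ f x * (f y)⁻¹ ∈ T

def IsDRR (T : Set G) : Prop :=
  ∀ f : Equiv.Perm G, IsCayleyAut T f → ∃ r : G, ∀ v, f v = v * r

lemma IsCayleyAut.of_diff_one {T : Set G} {f : Equiv.Perm G} (hf : IsCayleyAut (T \ {1}) f) :
    IsCayleyAut T f := by
  intro x y
  have hf := hf x y
  by_cases hxy : x = y
  · simp [hxy]
  · have hfxy : f x ≠ f y := f.injective.ne hxy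
    simpa [mul_inv_eq_one, hxy, hfxy] using hf

lemma IsDRR.diff_one {T : Set G} (hT : IsDRR T) : IsDRR (T \ {1}) :=
  fun f hf => hT f hf.of_diff_one

lemma IsDRR.apply_eq_self_of_mem_iff {S : Set G} (hS : IsDRR S) {α : G →* G}
    (hα : Function.Bijective α) (hαS : ∀ x, α x ∈ S ↔ x ∈ S) (x : G) : α x = x := by
  obtain ⟨r, hr⟩ := hS (Equiv.ofBijective α hα) fun x y => by
    simp only [Equiv.ofBijective_apply, ← map_inv, ← map_mul, hαS]
  have hr₁ : r = 1 := by simpa using (hr 1).symm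
  simpa [hr₁] using hr x

end Cayley

lemma MonoidHom.eq_one_of_coprime_card {G H : Type*} [Group G] [Group H] [Finite G] [Finite H]
    (hcop : Nat.Coprime (Nat.card G) (Nat.card H)) (f : G →* H) (g : G) : f g = 1 :=
  orderOf_eq_one_iff.mp <| Nat.eq_one_of_dvd_coprimes hcop
    ((orderOf_map_dvd f g).trans (orderOf_dvd_natCard g)) (orderOf_dvd_natCard (f g))

/-- The Cayley digraph `Cay(G₁ × G₂, lexProd S₁ S₂)` is the lexicographic product
`Cay(G₁, S₁)[Cay(G₂, S₂)]`. -/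
def lexProd {G₁ G₂ : Type*} [One G₁] (S₁ : Set G₁) (S₂ : Set G₂) : Set (G₁ × G₂) :=
  S₁ ×ˢ Set.univ ∪ {1} ×ˢ S₂

lemma mk_one_mem_lexProd {G₁ G₂ : Type*} [One G₁] [One G₂] {S₁ : Set G₁} {S₂ : Set G₂}
    (h : (1 : G₂) ∉ S₂) (a : G₁) : (a, 1) ∈ lexProd S₁ S₂ ↔ a ∈ S₁ := by
  simp [lexProd, h]

lemma one_mk_mem_lexProd {G₁ G₂ : Type*} [One G₁] {S₁ : Set G₁} {S₂ : Set G₂}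
    (h : (1 : G₁) ∉ S₁) (b : G₂) : (1, b) ∈ lexProd S₁ S₂ ↔ b ∈ S₂ := by
  simp [lexProd, h]

section Product

variable {G₁ G₂ : Type*} [Group G₁] [Group G₂]

lemma MonoidHom.apply_eq_of_coprime_card [Finite G₁] [Finite G₂]
    (hcop : Nat.Coprime (Nat.card G₁) (Nat.card G₂)) (φ : G₁ × G₂ →* G₁ × G₂) (p : G₁ × G₂) :
    φ p = ((φ (p.1, 1)).1, (φ (1, p.2)).2) := by
  have h₁ : (φ (p.1, 1)).2 = 1 :=
    ((MonoidHom.snd _ _).comp (φ.comp (MonoidHom.inl _ _))).eq_one_of_coprime_card hcop p.1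
  have h₂ : (φ (1, p.2)).1 = 1 :=
    ((MonoidHom.fst _ _).comp (φ.comp (MonoidHom.inr _ _))).eq_one_of_coprime_card hcop.symm p.2
  calc φ p = φ (p.1, 1) * φ (1, p.2) := by rw [← map_mul, Prod.mk_mul_mk, mul_one, one_mul]
    _ = _ := Prod.ext (by simp [h₂]) (by simp [h₁])

lemma isCayleyAut_lexProd_prodShear (S₁ : Set G₁) (S₂ : Set G₂) (c : G₁ → G₂) :
    IsCayleyAut (lexProd S₁ S₂)
      (Equiv.prodShear (Equiv.refl G₁) fun a => Equiv.mulRight (c a)) := by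
  rintro ⟨x₁, x₂⟩ ⟨y₁, y₂⟩
  by_cases h : x₁ = y₁
  · subst h
    simp [lexProd, mul_assoc]
  · simp [lexProd, mul_inv_eq_one, h]

lemma not_isDRR_lexProd [Nontrivial G₁] [Nontrivial G₂] (S₁ : Set G₁) (S₂ : Set G₂) :
    ¬ IsDRR (lexProd S₁ S₂) := by
  classical
  obtain ⟨a, ha⟩ := exists_ne (1 : G₁)
  obtain ⟨b, hb⟩ := exists_ne (1 : G₂)
  intro hDRR
  obtain ⟨r, hr⟩ := hDRR _ (isCayleyAut_lexProd_prodShear S₁ S₂ (Pi.mulSingle a b))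
  have hr₁ : r = (1, 1) := by simpa [Pi.mulSingle_eq_of_ne' ha] using (hr 1).symm
  simpa [hr₁, hb] using hr (a, 1)

lemma MulAut.eq_one_of_image_lexProd [Finite G₁] [Finite G₂]
    (hcop : Nat.Coprime (Nat.card G₁) (Nat.card G₂)) {S₁ : Set G₁} {S₂ : Set G₂}
    (hS₁ : IsDRR S₁) (hS₂ : IsDRR S₂) (h₁ : (1 : G₁) ∉ S₁) (h₂ : (1 : G₂) ∉ S₂)
    (φ : MulAut (G₁ × G₂)) (hφ : φ '' lexProd S₁ S₂ = lexProd S₁ S₂) : φ = 1 := by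
  have hφS (p : G₁ × G₂) : φ p ∈ lexProd S₁ S₂ ↔ p ∈ lexProd S₁ S₂ := by
    conv_lhs => rw [← hφ]
    exact φ.injective.mem_set_image
  let ψ : G₁ × G₂ →* G₁ × G₂ := φ
  let α : G₁ →* G₁ := (MonoidHom.fst _ _).comp (ψ.comp (MonoidHom.inl _ _))
  let β : G₂ →* G₂ := (MonoidHom.snd _ _).comp (ψ.comp (MonoidHom.inr _ _))
  have hφαβ (p : G₁ × G₂) : φ p = (α p.1, β p.2) := ψ.apply_eq_of_coprime_card hcop p
  have hα : Function.Bijective α := Finite.injective_iff_bijective.mp fun a a' h => by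
    have : φ (a, 1) = φ (a', 1) := by simp [hφαβ, h]
    simpa using φ.injective this
  have hβ : Function.Bijective β := Finite.injective_iff_bijective.mp fun b b' h => by
    have : φ (1, b) = φ (1, b') := by simp [hφαβ, h]
    simpa using φ.injective this
  have hαS (a : G₁) : α a ∈ S₁ ↔ a ∈ S₁ := by
    simpa [hφαβ, mk_one_mem_lexProd h₂] using hφS (a, 1)
  have hβS (b : G₂) : β b ∈ S₂ ↔ b ∈ S₂ := by
    simpa [hφαβ, one_mk_mem_lexProd h₁] using hφS (1, b)
  ext p
  · simpa [hφαβ] using hS₁.apply_eq_self_of_mem_iff hα hαS p.1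
  · simpa [hφαβ] using hS₂.apply_eq_self_of_mem_iff hβ hβS p.2

end Product

/-- Morris–Morris–Verret, Theorem 1.9: if `G₁` and `G₂` are nontrivial
groups of coprime orders each admitting a DRR, then `G₁ × G₂` is not DRR-detecting. -/
theorem stmt16 {G₁ G₂ : Type*} [Group G₁] [Group G₂] [Finite G₁] [Finite G₂]
    [Nontrivial G₁] [Nontrivial G₂]
    (hcop : Nat.Coprime (Nat.card G₁) (Nat.card G₂))
    (hd1 : ∃ T : Set G₁, ∀ f : Equiv.Perm G₁,
      (∀ x y : G₁, x * y⁻¹ ∈ T ↔ f x * (f y)⁻¹ ∈ T) → ∃ r : G₁, ∀ v, f v = v * r)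
    (hd2 : ∃ T : Set G₂, ∀ f : Equiv.Perm G₂,
      (∀ x y : G₂, x * y⁻¹ ∈ T ↔ f x * (f y)⁻¹ ∈ T) → ∃ r : G₂, ∀ v, f v = v * r) :
    ∃ S : Set (G₁ × G₂),
      (∀ φ : MulAut (G₁ × G₂), φ '' S = S → φ = 1) ∧
      ∃ f : Equiv.Perm (G₁ × G₂),
        (∀ x y : G₁ × G₂, x * y⁻¹ ∈ S ↔ f x * (f y)⁻¹ ∈ S) ∧
        ¬ ∃ r : G₁ × G₂, ∀ v, f v = v * r := by
  obtain ⟨T₁, hT₁ : IsDRR T₁⟩ := hd1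
  obtain ⟨T₂, hT₂ : IsDRR T₂⟩ := hd2
  refine ⟨lexProd (T₁ \ {1}) (T₂ \ {1}), fun φ hφ => ?_, ?_⟩
  · exact MulAut.eq_one_of_image_lexProd hcop hT₁.diff_one hT₂.diff_one (by simp) (by simp) φ hφ
  · simpa only [IsDRR, IsCayleyAut, not_forall, Classical.not_imp, exists_prop] using
      not_isDRR_lexProd (T₁ \ {1}) (T₂ \ {1})
end
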